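/- arXiv:2410.22959 — 2 statements merged into one kernel-verified Lean document; each statement's English description precedes it below -/
import Mathlib

section
/- Let d be a natural number, μ : Fin d → ℝ, and σ : Fin d → ℝ≥0. The product measure ∏_{i} gaussianReal (μ i) (σ i) on the function space (Fin d → ℝ), transported to EuclideanSpace ℝ (Fin d) via the canonical measurable equivalence, equals the multivariate Gaussian distribution with mean vector μ and diagonal covariance matrix diag(σ). In other words, a vector of independent univariate Gaussian random variables with means μ_i and variances σ_i is jointly distributed as a multivariate Gaussian with mean μ and covariance matrix whose diagonal entries are σ_i and off-diagonal entries are 0. -/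
open MeasureTheory ProbabilityTheory
open scoped NNReal

/-- The standard Gaussian measure on `Fin d → ℝ`: the product of `d` independent
standard univariate Gaussians. -/
noncomputable def stdGaussianPi (d : ℕ) : Measure (Fin d → ℝ) :=
  Measure.pi fun _ => gaussianReal 0 1

open scoped ComplexOrder in
noncomputable def Matrix.PosSemidef.sqrt {n 𝕜 : Type*} [Fintype n] [DecidableEq n] [RCLike 𝕜]
    {A : Matrix n n 𝕜} (hA : A.PosSemidef) : Matrix n n 𝕜 :=
  hA.1.eigenvectorUnitary.1 * Matrix.diagonal ((↑) ∘ Real.sqrt ∘ hA.1.eigenvalues) *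
    (star hA.1.eigenvectorUnitary : Matrix n n 𝕜)

/-- The multivariate Gaussian distribution `N(μ, Σ)` on `EuclideanSpace ℝ (Fin d)` with mean
vector `μ` and positive semidefinite covariance matrix `Σ`: the pushforward of the standard
Gaussian under the affine map `x ↦ μ + √Σ x`, where `√Σ` is the positive semidefinite
square root of `Σ`. -/
noncomputable def multivariateGaussian {d : ℕ} (μ : EuclideanSpace ℝ (Fin d))
    {S : Matrix (Fin d) (Fin d) ℝ} (hS : S.PosSemidef) :
    Measure (EuclideanSpace ℝ (Fin d)) :=
  Measure.map
    (fun x => μ + (MeasurableEquiv.toLp 2 (Fin d → ℝ)) (hS.sqrt.mulVec x))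
    (stdGaussianPi d)

/-! The positive semidefinite square root of `diag σ` is `diag √σ`, so `N(μ, diag σ)` is the
image of the standard Gaussian under the coordinatewise affine map `x ↦ (μ i + √(σ i) * x i)ᵢ`,
and a product of maps each carrying `N(0, 1)` to `N(μ i, σ i)` carries the product of the
standard Gaussians to the product of the `N(μ i, σ i)`. -/

namespace Matrix.PosSemidef

open scoped MatrixOrder ComplexOrder

variable {n : Type*} [Fintype n] [DecidableEq n]

theorem sqrt_eq_cfcSqrt {𝕜 : Type*} [RCLike 𝕜] {A : Matrix n n 𝕜} (hA : A.PosSemidef) :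
    hA.sqrt = CFC.sqrt A := by
  rw [CFC.sqrt_eq_real_sqrt _ hA.nonneg, cfcₙ_eq_cfc (hf0 := Real.sqrt_zero), hA.1.cfc_eq]
  simp [Matrix.PosSemidef.sqrt, Matrix.IsHermitian.cfc]

theorem sqrt_diagonal {d : n → ℝ} (hd : (diagonal d).PosSemidef) :
    hd.sqrt = diagonal fun i => √(d i) := by
  have hsqrt : (diagonal fun i => √(d i)).PosSemidef :=
    posSemidef_diagonal_iff.mpr fun i => Real.sqrt_nonneg _
  rw [hd.sqrt_eq_cfcSqrt, CFC.sqrt_eq_iff _ _ hd.nonneg hsqrt.nonneg, diagonal_mul_diagonal]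
  simp [Real.mul_self_sqrt (posSemidef_diagonal_iff.mp hd _)]

end Matrix.PosSemidef

lemma gaussianReal_map_const_add_sqrt_mul (m : ℝ) (v : ℝ≥0) :
    (gaussianReal 0 1).map (fun x => m + √v * x) = gaussianReal m v := by
  have hscale : (gaussianReal 0 1).map (√v * ·) = gaussianReal 0 v := by
    rw [gaussianReal_map_const_mul]
    congr 1
    · ring
    · ext; simp
  calc (gaussianReal 0 1).map (fun x => m + √v * x)
      = ((gaussianReal 0 1).map (√v * ·)).map (m + ·) :=
        (Measure.map_map (measurable_const_add m) (measurable_const_mul _)).symm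
    _ = gaussianReal m v := by rw [hscale, gaussianReal_map_const_add, zero_add]

lemma measurePreserving_stdGaussianPi_const_add_sqrt_mul {d : ℕ} (μ : Fin d → ℝ)
    (σ : Fin d → ℝ≥0) :
    MeasurePreserving (fun x i => μ i + √(σ i) * x i) (stdGaussianPi d)
      (Measure.pi fun i => gaussianReal (μ i) (σ i)) :=
  measurePreserving_pi _ _ fun i =>
    ⟨(measurable_const_mul _).const_add _, gaussianReal_map_const_add_sqrt_mul (μ i) (σ i)⟩

/-- A vector of independent univariate Gaussian random variables with means `μ i` and
variances `σ i` is jointly multivariate Gaussian with mean vector `μ` and diagonal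
covariance matrix `diag σ`: the product measure `∏ i, gaussianReal (μ i) (σ i)` on
`Fin d → ℝ`, transported to `EuclideanSpace ℝ (Fin d)` along the canonical measurable
equivalence, equals `N(μ, Matrix.diagonal σ)`. -/
theorem pi_gaussianReal_eq_multivariateGaussian_diagonal (d : ℕ)
    (μ : Fin d → ℝ) (σ : Fin d → ℝ≥0) :
    Measure.map (MeasurableEquiv.toLp 2 (Fin d → ℝ))
        (Measure.pi fun i => gaussianReal (μ i) (σ i)) =
      multivariateGaussian ((MeasurableEquiv.toLp 2 (Fin d → ℝ)) μ)
        (Matrix.posSemidef_diagonal_iff.mpr fun i => (σ i).coe_nonneg :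
          (Matrix.diagonal fun i => (σ i : ℝ)).PosSemidef) := by
  have hmp := measurePreserving_stdGaussianPi_const_add_sqrt_mul μ σ
  rw [_root_.multivariateGaussian, Matrix.PosSemidef.sqrt_diagonal, ← hmp.map_eq,
    Measure.map_map (MeasurableEquiv.measurable _) hmp.measurable]
  congr 1
  funext x
  ext i
  simp [Matrix.mulVec_diagonal]
end

section
/- Let Z be a nonempty finite type (the latent variable values) and let p, p' : Z → ℝ be two nonnegative functions (the complete-data likelihoods z ↦ P(y, z | θ) and z ↦ P(y, z | θ') at two parameter values) with marginal likelihoods L = ∑_{z} p z and L' = ∑_{z} p' z. Assume p z > 0 and p' z > 0 for all z, and define the responsibilities r z = p z / L. If the M-step condition ∑_{z} r z * Real.log (p' z) ≥ ∑_{z} r z * Real.log (p z) holds, then Real.log L' ≥ Real.log L. In words: any parameter update that does not decrease the expected complete-data log-likelihood under the current posterior responsibilities does not decrease the marginal log-likelihood, so the EM iteration with known mean prior produces a monotonically non-decreasing log-likelihood sequence. -/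
/-!
Writing `r z = p z / L` for the posterior responsibilities, concavity of `log` (Jensen's inequality
for the weights `r`) gives
`∑ z, r z * (log (p' z) - log (p z)) ≤ log (∑ z, r z * (p' z / p z)) = log (L' / L)`,
which is the nonnegativity of the Kullback–Leibler divergence between the two posteriors in
disguise. The M-step condition says the left-hand side is nonnegative.
-/

open Finset Real

lemma Finset.sum_div_sum_mul_log_sub_le_log_sum_sub {ι : Type*} (s : Finset ι) {p q : ι → ℝ}
    (hp : ∀ i ∈ s, 0 < p i) (hq : ∀ i ∈ s, 0 < q i) :
    ∑ i ∈ s, p i / (∑ j ∈ s, p j) * (log (q i) - log (p i)) ≤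
      log (∑ i ∈ s, q i) - log (∑ i ∈ s, p i) := by
  rcases s.eq_empty_or_nonempty with rfl | hs
  · simp
  have hP : 0 < ∑ j ∈ s, p j := sum_pos hp hs
  have hQ : 0 < ∑ j ∈ s, q j := sum_pos hq hs
  have hweights : ∑ i ∈ s, p i / (∑ j ∈ s, p j) = 1 := by
    rw [← sum_div, div_self hP.ne']
  have hmean : ∑ i ∈ s, p i / (∑ j ∈ s, p j) * (q i / p i) = (∑ i ∈ s, q i) / ∑ j ∈ s, p j := by
    rw [sum_div]
    refine sum_congr rfl fun i hi => ?_
    field_simp [(hp i hi).ne']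
  have jensen := strictConcaveOn_log_Ioi.concaveOn.le_map_sum
    (fun i hi => (div_pos (hp i hi) hP).le) hweights
    (fun i hi => Set.mem_Ioi.2 (div_pos (hq i hi) (hp i hi)))
  simp only [smul_eq_mul, hmean] at jensen
  rw [← log_div hQ.ne' hP.ne']
  refine le_of_eq_of_le (sum_congr rfl fun i hi => ?_) jensen
  rw [log_div (hq i hi).ne' (hp i hi).ne']

theorem em_loglikelihood_monotone_general (Z : Type*) [Fintype Z]
    (p p' : Z → ℝ) (hp : ∀ z, 0 < p z) (hp' : ∀ z, 0 < p' z)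
    (L L' : ℝ) (hL : L = ∑ z, p z) (hL' : L' = ∑ z, p' z)
    (r : Z → ℝ) (hr : ∀ z, r z = p z / L)
    (hMstep : ∑ z, r z * Real.log (p z) ≤ ∑ z, r z * Real.log (p' z)) :
    Real.log L ≤ Real.log L' := by
  have hgain : ∑ z, r z * (log (p' z) - log (p z)) ≤ log L' - log L := by
    simpa only [hL, hL', hr] using
      univ.sum_div_sum_mul_log_sub_le_log_sum_sub (fun z _ => hp z) (fun z _ => hp' z)
  simp only [mul_sub, sum_sub_distrib] at hgain
  linarith

/-- Monotonicity of the EM iteration: let `Z` be a nonempty finite type of latent values,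
`p z = P(y, z | θ)` and `p' z = P(y, z | θ')` strictly positive complete-data likelihoods
with marginals `L = ∑ z, p z` and `L' = ∑ z, p' z`, and responsibilities `r z = p z / L`.
If the M-step condition `∑ z, r z * log (p' z) ≥ ∑ z, r z * log (p z)` holds, then
`log L' ≥ log L`. -/
theorem em_loglikelihood_monotone (Z : Type*) [Fintype Z] [Nonempty Z]
    (p p' : Z → ℝ) (hp : ∀ z, 0 < p z) (hp' : ∀ z, 0 < p' z)
    (L L' : ℝ) (hL : L = ∑ z, p z) (hL' : L' = ∑ z, p' z)
    (r : Z → ℝ) (hr : ∀ z, r z = p z / L)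
    (hMstep : ∑ z, r z * Real.log (p z) ≤ ∑ z, r z * Real.log (p' z)) :
    Real.log L ≤ Real.log L' :=
  em_loglikelihood_monotone_general Z p p' hp hp' L L' hL hL' r hr hMstep
end
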